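/- Let ψ, φ₁, φ₂ be Orlicz functions such that φ₂ satisfies φ₂(a·v·w) ≤ φ₂(v)·φ₂(w) for all v, w ≥ 0 for some a > 0 (Δ' globally), ψ ∘ φ₂ = φ₁, and set ζ = ψ* ∘ φ₂ where ψ* is the complementary function of ψ. Then for all u, v, w ≥ 0: uvw ≤ φ₂*(u) + φ₁(v/a) + ζ(w). -/

import Mathlib

/-!
Young's inequality for `φ₂` gives `u (vw) ≤ φ₂*(u) + φ₂(vw)`. Writing `vw = a (v/a) w`, the Δ'
condition bounds `φ₂(vw)` by the product `φ₂(v/a) φ₂(w)`, and Young's inequality for `ψ` splits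
this product into `ψ(φ₂(v/a)) + ψ*(φ₂(w)) = φ₁(v/a) + ζ(w)`.
-/

open Filter

noncomputable def orliczConjE (φ : ℝ → ℝ) (u : ℝ) : EReal :=
  ⨆ v ∈ Set.Ioi (0 : ℝ), ((u * v - φ v : ℝ) : EReal)

open Topology

lemma ConvexOn.apply_le_mul_apply_one {φ : ℝ → ℝ} (hconv : ConvexOn ℝ (Set.Ici 0) φ)
    (h0 : φ 0 = 0) {s : ℝ} (hs : 0 ≤ s) (hs1 : s ≤ 1) : φ s ≤ s * φ 1 := by
  simpa [h0] using hconv.2 (x := 1) (y := 0) (Set.mem_Ici.2 zero_le_one) Set.self_mem_Ici hs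
    (sub_nonneg.2 hs1) (add_sub_cancel s 1)

lemma coe_sub_le_orliczConjE (φ : ℝ → ℝ) (u : ℝ) {t : ℝ} (ht : 0 < t) :
    ((u * t - φ t : ℝ) : EReal) ≤ orliczConjE φ u :=
  le_iSup₂ (f := fun v (_ : v ∈ Set.Ioi (0 : ℝ)) => ((u * v - φ v : ℝ) : EReal)) t ht

/-- The supremum defining `orliczConjE` omits `v = 0`; the value `0` there is recovered as a limit,
since convexity with `φ 0 = 0` forces `φ v ≤ v φ 1` near `0`. -/
lemma orliczConjE_nonneg {φ : ℝ → ℝ} (hconv : ConvexOn ℝ (Set.Ici 0) φ) (h0 : φ 0 = 0)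
    (u : ℝ) : 0 ≤ orliczConjE φ u := by
  have hlim : Tendsto (fun s : ℝ => ((s * (u - φ 1) : ℝ) : EReal)) (𝓝[>] 0) (𝓝 0) :=
    ((continuous_coe_real_ereal.comp (continuous_id.mul continuous_const)).tendsto' 0 0
      (by simp)).mono_left nhdsWithin_le_nhds
  refine le_of_tendsto hlim ?_
  filter_upwards [Ioo_mem_nhdsGT zero_lt_one] with s ⟨hs, hs1⟩
  calc ((s * (u - φ 1) : ℝ) : EReal) ≤ ((u * s - φ s : ℝ) : EReal) := by
        have := hconv.apply_le_mul_apply_one h0 hs.le hs1.le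
        exact_mod_cast (by linarith)
    _ ≤ orliczConjE φ u := coe_sub_le_orliczConjE φ u hs

lemma coe_sub_le_orliczConjE_of_nonneg {φ : ℝ → ℝ} (hconv : ConvexOn ℝ (Set.Ici 0) φ)
    (h0 : φ 0 = 0) (u : ℝ) {t : ℝ} (ht : 0 ≤ t) :
    ((u * t - φ t : ℝ) : EReal) ≤ orliczConjE φ u := by
  rcases ht.eq_or_lt with rfl | ht
  · simpa [h0] using orliczConjE_nonneg hconv h0 u
  · exact coe_sub_le_orliczConjE φ u ht

lemma mul_le_add_of_coe_eq_orliczConjE {φ : ℝ → ℝ} (hconv : ConvexOn ℝ (Set.Ici 0) φ)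
    (h0 : φ 0 = 0) {s t c : ℝ} (hs : 0 ≤ s) (hc : (c : EReal) = orliczConjE φ t) :
    s * t ≤ φ s + c := by
  have hyoung : ((t * s - φ s : ℝ) : EReal) ≤ c :=
    hc ▸ coe_sub_le_orliczConjE_of_nonneg hconv h0 t hs
  have hyoung' : t * s - φ s ≤ c := by exact_mod_cast hyoung
  linarith

theorem orlicz_mult_ineq_b_general (ψ φ₁ φ₂ ψstar : ℝ → ℝ)
    (hψconv : ConvexOn ℝ (Set.Ici 0) ψ) (hψ0 : ψ 0 = 0)
    (hφ₂conv : ConvexOn ℝ (Set.Ici 0) φ₂) (hφ₂0 : φ₂ 0 = 0)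
    (hφ₂nn : ∀ x, 0 ≤ x → 0 ≤ φ₂ x)
    (a : ℝ) (ha : 0 < a)
    (hΔ : ∀ v w : ℝ, 0 ≤ v → 0 ≤ w → φ₂ (a * v * w) ≤ φ₂ v * φ₂ w)
    (hψstar : ∀ u : ℝ, 0 ≤ u → ((ψstar u : ℝ) : EReal) = orliczConjE ψ u)
    (hcomp : ∀ u : ℝ, 0 ≤ u → ψ (φ₂ u) = φ₁ u) :
    ∀ u v w : ℝ, 0 ≤ u → 0 ≤ v → 0 ≤ w →
      ((u * v * w : ℝ) : EReal) ≤
        orliczConjE φ₂ u + (((φ₁ (v / a) + ψstar (φ₂ w)) : ℝ) : EReal) := by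
  intro u v w _ hv hw
  have hva : 0 ≤ v / a := div_nonneg hv ha.le
  have hvw : φ₂ (v * w) ≤ φ₁ (v / a) + ψstar (φ₂ w) :=
    calc φ₂ (v * w) = φ₂ (a * (v / a) * w) := by rw [mul_div_cancel₀ v ha.ne']
      _ ≤ φ₂ (v / a) * φ₂ w := hΔ _ _ hva hw
      _ ≤ ψ (φ₂ (v / a)) + ψstar (φ₂ w) :=
        mul_le_add_of_coe_eq_orliczConjE hψconv hψ0 (hφ₂nn _ hva) (hψstar _ (hφ₂nn w hw))
      _ = φ₁ (v / a) + ψstar (φ₂ w) := by rw [hcomp _ hva]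
  calc ((u * v * w : ℝ) : EReal)
      = ((u * (v * w) - φ₂ (v * w) : ℝ) : EReal) + ((φ₂ (v * w) : ℝ) : EReal) := by
        rw [← EReal.coe_add, mul_assoc, sub_add_cancel]
    _ ≤ orliczConjE φ₂ u + (((φ₁ (v / a) + ψstar (φ₂ w)) : ℝ) : EReal) :=
        add_le_add (coe_sub_le_orliczConjE_of_nonneg hφ₂conv hφ₂0 u (mul_nonneg hv hw))
          (by exact_mod_cast hvw)

/-- Let ψ, φ₁, φ₂ be Orlicz functions with φ₂(a·v·w) ≤ φ₂(v)·φ₂(w) for all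
v, w ≥ 0 (Δ' globally, constant a > 0), ψ ∘ φ₂ = φ₁, ψ* the (finite-valued) complementary
function of ψ, and ζ = ψ* ∘ φ₂. Then uvw ≤ φ₂*(u) + φ₁(v/a) + ζ(w) for all u, v, w ≥ 0. -/
theorem orlicz_mult_ineq_b (ψ φ₁ φ₂ ψstar : ℝ → ℝ)
    (hψconv : ConvexOn ℝ (Set.Ici 0) ψ) (hψ0 : ψ 0 = 0)
    (hψnn : ∀ x, 0 ≤ x → 0 ≤ ψ x) (hψtop : Tendsto ψ atTop atTop)
    (hφ₁conv : ConvexOn ℝ (Set.Ici 0) φ₁) (hφ₁0 : φ₁ 0 = 0)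
    (hφ₁nn : ∀ x, 0 ≤ x → 0 ≤ φ₁ x) (hφ₁top : Tendsto φ₁ atTop atTop)
    (hφ₂conv : ConvexOn ℝ (Set.Ici 0) φ₂) (hφ₂0 : φ₂ 0 = 0)
    (hφ₂nn : ∀ x, 0 ≤ x → 0 ≤ φ₂ x) (hφ₂top : Tendsto φ₂ atTop atTop)
    (a : ℝ) (ha : 0 < a)
    (hΔ : ∀ v w : ℝ, 0 ≤ v → 0 ≤ w → φ₂ (a * v * w) ≤ φ₂ v * φ₂ w)
    (hψstar : ∀ u : ℝ, 0 ≤ u → ((ψstar u : ℝ) : EReal) = orliczConjE ψ u)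
    (hcomp : ∀ u : ℝ, 0 ≤ u → ψ (φ₂ u) = φ₁ u) :
    ∀ u v w : ℝ, 0 ≤ u → 0 ≤ v → 0 ≤ w →
      ((u * v * w : ℝ) : EReal) ≤
        orliczConjE φ₂ u + (((φ₁ (v / a) + ψstar (φ₂ w)) : ℝ) : EReal) :=
  orlicz_mult_ineq_b_general ψ φ₁ φ₂ ψstar hψconv hψ0 hφ₂conv hφ₂0 hφ₂nn a ha hΔ hψstar hcomp
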